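/- There exists a constant C > 0 such that the following holds. Let ψ : [0,1] × ℝ → ℝ be smooth with compact support in the z-variable, satisfying for every z ∈ ℝ: ψ(0,z) = ψ(1,z) = ∂_r ψ(1,z) = 0 and lim_{r→0⁺} (L_r ψ)(r,z) = 0, where L_r acts in the r-variable by (L_r ψ)(r,z) = ∂_r² ψ(r,z) + (1/r) ∂_r ψ(r,z) − ψ(r,z)/r². Then ∫_ℝ ∫₀¹ [ |(L_r ψ)(r,z)|² r + 2 |∂_r ∂_z (r ψ(r,z))|² (1/r) + |∂_z² ψ(r,z)|² r ] dr dz ≤ C ∫_ℝ ∫₀¹ |(L_r ψ)(r,z) + ∂_z² ψ(r,z)|² r dr dz. -/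

import Mathlib

open MeasureTheory Set Filter
open Function

/-- The operator `L_r` acting in the radial variable:
`(L_r ψ)(r,z) = ∂_r² ψ + (1/r) ∂_r ψ − ψ/r²`. -/
noncomputable def Lrad (ψ : ℝ → ℝ → ℝ) (r z : ℝ) : ℝ :=
  deriv (deriv (fun s => ψ s z)) r + deriv (fun s => ψ s z) r / r - ψ r z / r ^ 2

noncomputable def pd1 (F : ℝ × ℝ → ℝ) (p : ℝ × ℝ) : ℝ := fderiv ℝ F p (1, 0)
noncomputable def pd2 (F : ℝ × ℝ → ℝ) (p : ℝ × ℝ) : ℝ := fderiv ℝ F p (0, 1)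

lemma pd1_smooth {F : ℝ × ℝ → ℝ} (hF : ContDiff ℝ (⊤ : ℕ∞) F) : ContDiff ℝ (⊤ : ℕ∞) (pd1 F) :=
  (hF.fderiv_right (by simp)).clm_apply contDiff_const
lemma pd2_smooth {F : ℝ × ℝ → ℝ} (hF : ContDiff ℝ (⊤ : ℕ∞) F) : ContDiff ℝ (⊤ : ℕ∞) (pd2 F) :=
  (hF.fderiv_right (by simp)).clm_apply contDiff_const

lemma hasDerivAt_pd1 {F : ℝ × ℝ → ℝ} (hF : ContDiff ℝ (⊤ : ℕ∞) F) (r z : ℝ) :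
    HasDerivAt (fun s => F (s, z)) (pd1 F (r, z)) r := by
  have h1 : HasDerivAt (fun s : ℝ => (s, z)) ((1 : ℝ), (0 : ℝ)) r := by
    simpa using (hasDerivAt_id r).prodMk (hasDerivAt_const r z)
  exact (hF.differentiable (by simp) (r, z)).hasFDerivAt.comp_hasDerivAt r h1

lemma hasDerivAt_pd2 {F : ℝ × ℝ → ℝ} (hF : ContDiff ℝ (⊤ : ℕ∞) F) (r z : ℝ) :
    HasDerivAt (fun t => F (r, t)) (pd2 F (r, z)) z := by
  have h1 : HasDerivAt (fun t : ℝ => (r, t)) ((0 : ℝ), (1 : ℝ)) z := by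
    simpa using (hasDerivAt_const z r).prodMk (hasDerivAt_id z)
  exact (hF.differentiable (by simp) (r, z)).hasFDerivAt.comp_hasDerivAt z h1

lemma schwarz {F : ℝ × ℝ → ℝ} (hF : ContDiff ℝ (⊤ : ℕ∞) F) (p : ℝ × ℝ) :
    pd1 (pd2 F) p = pd2 (pd1 F) p := by
  have hdF : ∀ y, HasFDerivAt F (fderiv ℝ F y) y := fun y =>
    (hF.differentiable (by simp) y).hasFDerivAt
  have hd2 : HasFDerivAt (fderiv ℝ F) (fderiv ℝ (fderiv ℝ F) p) p :=
    (((hF.fderiv_right (m := 1) (WithTop.coe_le_coe.mpr le_top)).differentiable (by simp)) p).hasFDerivAt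
  have hsym := second_derivative_symmetric hdF hd2 (1, 0) (0, 1)
  have e1 : pd1 (pd2 F) p = fderiv ℝ (fderiv ℝ F) p (1, 0) (0, 1) := by
    unfold pd1 pd2
    have : fderiv ℝ (fun q => fderiv ℝ F q (0, 1)) p
        = (fderiv ℝ (fderiv ℝ F) p).flip (0, 1) + (fderiv ℝ F p).comp (0 : ℝ×ℝ →L[ℝ] ℝ×ℝ) := by
      have := fderiv_clm_apply (c := fderiv ℝ F) (u := fun _ => ((0:ℝ), (1:ℝ)))
        (((hF.fderiv_right (m := 1) (WithTop.coe_le_coe.mpr le_top)).differentiable (by simp)) p) (differentiableAt_const _)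
      simpa [fderiv_fun_const] using this
    simp [this]
  have e2 : pd2 (pd1 F) p = fderiv ℝ (fderiv ℝ F) p (0, 1) (1, 0) := by
    unfold pd1 pd2
    have : fderiv ℝ (fun q => fderiv ℝ F q (1, 0)) p
        = (fderiv ℝ (fderiv ℝ F) p).flip (1, 0) + (fderiv ℝ F p).comp (0 : ℝ×ℝ →L[ℝ] ℝ×ℝ) := by
      have := fderiv_clm_apply (c := fderiv ℝ F) (u := fun _ => ((1:ℝ), (0:ℝ)))
        (((hF.fderiv_right (m := 1) (WithTop.coe_le_coe.mpr le_top)).differentiable (by simp)) p) (differentiableAt_const _)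
      simpa [fderiv_fun_const] using this
    simp [this]
  rw [e1, e2, hsym]

/-- If `F` vanishes for `R < |z|`, so do its partial derivatives. -/
lemma pd_vanish {F : ℝ × ℝ → ℝ} {R : ℝ} (hv : ∀ p : ℝ × ℝ, R < |p.2| → F p = 0)
    (p : ℝ × ℝ) (hp : R < |p.2|) : pd1 F p = 0 ∧ pd2 F p = 0 := by
  have hopen : IsOpen {q : ℝ × ℝ | R < |q.2|} :=
    (isOpen_lt continuous_const (continuous_abs.comp continuous_snd))
  have hev : F =ᶠ[nhds p] (fun _ => (0:ℝ)) :=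
    Filter.eventually_of_mem (hopen.mem_nhds hp) (fun q hq => hv q hq)
  have : fderiv ℝ F p = fderiv ℝ (fun _ => (0:ℝ)) p := hev.fderiv_eq
  constructor <;> simp [pd1, pd2, this]

/-- A continuous function vanishing for `R < |z|` is bounded on `Icc 0 1 × ℝ`. -/
lemma bound_aux {F : ℝ × ℝ → ℝ} (hc : Continuous F) {R : ℝ}
    (hv : ∀ p : ℝ × ℝ, R < |p.2| → F p = 0) :
    ∃ M : ℝ, 0 ≤ M ∧ ∀ r z : ℝ, r ∈ Icc (0:ℝ) 1 → |F (r, z)| ≤ M := by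
  obtain ⟨M, hM⟩ :=
    (isCompact_Icc.prod (isCompact_Icc (a := -R) (b := R))).exists_bound_of_continuousOn
      hc.continuousOn
  refine ⟨max M 0, le_max_right _ _, fun r z hr => ?_⟩
  rcases le_or_gt (|z|) R with hz | hz
  · exact le_trans (hM (r, z) ⟨hr, abs_le.1 hz⟩) (le_max_left _ _)
  · simp [hv (r, z) hz, le_max_right]

/-- MVT bound: if `g 0 = 0` and `|g'| ≤ C` on `[0,r]`, then `|g r| ≤ C r`. -/
lemma mvt_bound {g g' : ℝ → ℝ} {C r : ℝ} (hr : 0 ≤ r)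
    (hg : ∀ x ∈ Icc (0:ℝ) r, HasDerivAt g (g' x) x)
    (hb : ∀ x ∈ Icc (0:ℝ) r, |g' x| ≤ C) (h0 : g 0 = 0) : |g r| ≤ C * r := by
  have := norm_image_sub_le_of_norm_deriv_le_segment'
    (f := g) (f' := g') (a := 0) (b := r)
    (fun x hx => (hg x hx).hasDerivWithinAt)
    (fun x hx => hb x (Ico_subset_Icc_self hx)) r (right_mem_Icc.2 hr)
  simpa [h0] using this

lemma integrable_swap_aux {e : ℝ × ℝ → ℝ} {M R : ℝ} (hM : 0 ≤ M)
    (hc : ContinuousOn e {p : ℝ × ℝ | 0 < p.1})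
    (hb : ∀ r z : ℝ, r ∈ Ioo (0:ℝ) 1 → |e (r, z)| ≤ M)
    (hv : ∀ r z : ℝ, R < |z| → e (r, z) = 0) :
    Integrable (fun q : ℝ × ℝ => e (q.2, q.1))
      ((volume : Measure ℝ).prod ((volume : Measure ℝ).restrict (Ioo 0 1))) := by
  have hmeas : MeasurableSet ((univ : Set ℝ) ×ˢ Ioo (0:ℝ) 1) :=
    MeasurableSet.univ.prod measurableSet_Ioo
  have hprod : (volume : Measure ℝ).prod ((volume : Measure ℝ).restrict (Ioo 0 1))
      = ((volume : Measure ℝ).prod (volume : Measure ℝ)).restrict ((univ : Set ℝ) ×ˢ Ioo 0 1) := by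
    rw [← Measure.prod_restrict, Measure.restrict_univ]
  have hcs : ContinuousOn (fun q : ℝ × ℝ => e (q.2, q.1)) ((univ : Set ℝ) ×ˢ Ioo (0:ℝ) 1) := by
    apply hc.comp (continuous_swap.continuousOn)
    intro q hq
    exact (mem_prod.1 hq).2.1
  have hmeas' : AEStronglyMeasurable (fun q : ℝ × ℝ => e (q.2, q.1))
      ((volume : Measure ℝ).prod ((volume : Measure ℝ).restrict (Ioo 0 1))) := by
    rw [hprod]; exact hcs.aestronglyMeasurable hmeas
  set g : ℝ × ℝ → ℝ := (Icc (-R) R ×ˢ (univ : Set ℝ)).indicator (fun _ => M) with hg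
  have hgi : Integrable g
      ((volume : Measure ℝ).prod ((volume : Measure ℝ).restrict (Ioo 0 1))) := by
    rw [hg, integrable_indicator_iff (measurableSet_Icc.prod MeasurableSet.univ)]
    refine integrableOn_const (lt_top_iff_ne_top.1 ?_)
    rw [Measure.prod_prod]
    exact ENNReal.mul_lt_top (by simp)
      (by simpa using measure_mono (inter_subset_left (t := Ioo (0:ℝ) 1)) |>.trans_lt (by simp))
  refine hgi.mono' hmeas' ?_
  rw [hprod]
  filter_upwards [ae_restrict_mem hmeas] with q hq
  obtain ⟨-, hq2⟩ := mem_prod.1 hq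
  rcases le_or_gt (|q.1|) R with hz | hz
  · have : q ∈ Icc (-R) R ×ˢ (univ : Set ℝ) := ⟨abs_le.1 hz, mem_univ _⟩
    simpa [hg, indicator_of_mem this] using hb q.2 q.1 hq2
  · simp only [hv q.2 q.1 hz, norm_zero, hg, indicator_apply]
    split <;> simp [hM]

lemma integrableOn_aux {e1 : ℝ → ℝ} {M : ℝ} (hc : ContinuousOn e1 (Ioo 0 1))
    (hb : ∀ r ∈ Ioo (0:ℝ) 1, |e1 r| ≤ M) : IntegrableOn e1 (Ioo 0 1) volume := by
  have hconst : IntegrableOn (fun _ : ℝ => M) (Ioo 0 1) volume :=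
    integrableOn_const (by simp [Real.volume_Ioo])
  refine hconst.mono' (hc.aestronglyMeasurable measurableSet_Ioo) ?_
  filter_upwards [ae_restrict_mem measurableSet_Ioo] with r hr
  exact hb r hr

lemma integral_deriv_zero {q qd : ℝ → ℝ} {R : ℝ} (hR : 0 ≤ R)
    (hd : ∀ z, HasDerivAt q (qd z) z) (hcont : Continuous qd)
    (hq : ∀ z, R < |z| → q z = 0) (hqd : ∀ z, R < |z| → qd z = 0) :
    ∫ z, qd z = 0 := by
  have hsupp : support qd ⊆ Ioc (-(R+1)) (R+1) := by
    intro z hz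
    by_contra hzn
    rcases lt_or_ge R (|z|) with h | h
    · exact hz (hqd z h)
    · exact hzn ⟨by cases abs_le.1 h; linarith, by cases abs_le.1 h; linarith⟩
  have h1 := intervalIntegral.integral_eq_integral_of_support_subset (μ := volume) hsupp
  have h2 := intervalIntegral.integral_eq_sub_of_hasDerivAt
    (f := q) (f' := qd) (a := -(R+1)) (b := R+1)
    (fun z _ => hd z) (hcont.intervalIntegrable _ _)
  rw [← h1, h2, hq (R+1) (by rw [abs_of_nonneg] <;> linarith),
    hq (-(R+1)) (by rw [abs_neg, abs_of_nonneg] <;> linarith), sub_zero]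

noncomputable def aF (F : ℝ × ℝ → ℝ) (p : ℝ × ℝ) : ℝ :=
  pd1 (pd1 F) p + pd1 F p / p.1 - F p / p.1 ^ 2
noncomputable def wF (F : ℝ × ℝ → ℝ) (p : ℝ × ℝ) : ℝ := pd2 F p + p.1 * pd1 (pd2 F) p
noncomputable def fF (F : ℝ × ℝ → ℝ) (p : ℝ × ℝ) : ℝ :=
  (aF F p) ^ 2 * p.1 + 2 * (wF F p) ^ 2 / p.1 + (pd2 (pd2 F) p) ^ 2 * p.1
noncomputable def gF (F : ℝ × ℝ → ℝ) (p : ℝ × ℝ) : ℝ :=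
  (aF F p + pd2 (pd2 F) p) ^ 2 * p.1
noncomputable def PF (F : ℝ × ℝ → ℝ) (p : ℝ × ℝ) : ℝ :=
  (F p + p.1 * pd1 F p) * pd2 (pd2 F) p
noncomputable def PdF (F : ℝ × ℝ → ℝ) (p : ℝ × ℝ) : ℝ :=
  (2 * pd1 F p + p.1 * pd1 (pd1 F) p) * pd2 (pd2 F) p
    + (F p + p.1 * pd1 F p) * pd1 (pd2 (pd2 F)) p
noncomputable def QF (F : ℝ × ℝ → ℝ) (p : ℝ × ℝ) : ℝ :=
  (F p / p.1 + pd1 F p) * wF F p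
noncomputable def QdF (F : ℝ × ℝ → ℝ) (p : ℝ × ℝ) : ℝ :=
  (pd2 F p / p.1 + pd2 (pd1 F) p) * wF F p
    + (F p / p.1 + pd1 F p) * (pd2 (pd2 F) p + p.1 * pd2 (pd1 (pd2 F)) p)

lemma hasDerivAt_PF {F : ℝ × ℝ → ℝ} (hF : ContDiff ℝ (⊤ : ℕ∞) F) (r z : ℝ) :
    HasDerivAt (fun s => PF F (s, z)) (PdF F (r, z)) r := by
  have h1 : HasDerivAt (fun s => F (s, z) + s * pd1 F (s, z))
      (pd1 F (r, z) + (1 * pd1 F (r, z) + r * pd1 (pd1 F) (r, z))) r :=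
    (hasDerivAt_pd1 hF r z).add ((hasDerivAt_id r).mul (hasDerivAt_pd1 (pd1_smooth hF) r z))
  have h2 := hasDerivAt_pd1 (pd2_smooth (pd2_smooth hF)) r z
  have := h1.mul h2
  unfold PF PdF
  refine this.congr_deriv ?_
  ring

lemma hasDerivAt_QF {F : ℝ × ℝ → ℝ} (hF : ContDiff ℝ (⊤ : ℕ∞) F) (r z : ℝ) :
    HasDerivAt (fun t => QF F (r, t)) (QdF F (r, z)) z := by
  have h1 : HasDerivAt (fun t => F (r, t) / r + pd1 F (r, t))
      (pd2 F (r, z) / r + pd2 (pd1 F) (r, z)) z :=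
    ((hasDerivAt_pd2 hF r z).div_const r).add (hasDerivAt_pd2 (pd1_smooth hF) r z)
  have h2 : HasDerivAt (fun t => pd2 F (r, t) + r * pd1 (pd2 F) (r, t))
      (pd2 (pd2 F) (r, z) + r * pd2 (pd1 (pd2 F)) (r, z)) z :=
    (hasDerivAt_pd2 (pd2_smooth hF) r z).add
      ((hasDerivAt_pd2 (pd1_smooth (pd2_smooth hF)) r z).const_mul r)
  have := h1.mul h2
  unfold QF QdF wF
  exact this

lemma key_algebra {F : ℝ × ℝ → ℝ} (hF : ContDiff ℝ (⊤ : ℕ∞) F) (r z : ℝ) (hr : r ≠ 0) :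
    fF F (r, z) - gF F (r, z) = 2 * (QdF F (r, z) - PdF F (r, z)) := by
  have h1 : pd2 (pd1 F) (r, z) = pd1 (pd2 F) (r, z) := (schwarz hF (r, z)).symm
  have h2 : pd2 (pd1 (pd2 F)) (r, z) = pd1 (pd2 (pd2 F)) (r, z) :=
    (schwarz (pd2_smooth hF) (r, z)).symm
  unfold fF gF QdF PdF aF wF
  rw [h1, h2]
  field_simp
  ring
set_option maxHeartbeats 1000000 in
/-- there is `C > 0` such that for every smooth `ψ` with compact
support in `z` satisfying the stream-function boundary conditions,
`∬ [|L_r ψ|² r + 2 |∂_r ∂_z (rψ)|² / r + |∂_z² ψ|² r] ≤ C ∬ |(L_r + ∂_z²)ψ|² r`. -/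
theorem stmt19 :
    ∃ C : ℝ, 0 < C ∧ ∀ ψ : ℝ → ℝ → ℝ,
      ContDiff ℝ (⊤ : ℕ∞) (Function.uncurry ψ) →
      (∃ R : ℝ, ∀ r z : ℝ, R < |z| → ψ r z = 0) →
      (∀ z : ℝ, ψ 0 z = 0 ∧ ψ 1 z = 0 ∧ deriv (fun s => ψ s z) 1 = 0 ∧
        Tendsto (fun r => Lrad ψ r z) (nhdsWithin 0 (Ioi 0)) (nhds 0)) →
      (∫⁻ z : ℝ, ∫⁻ r in Ioo (0:ℝ) 1,
          ENNReal.ofReal (|Lrad ψ r z| ^ 2 * r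
            + 2 * |deriv (fun s => s * deriv (ψ s) z) r| ^ 2 / r
            + |deriv (deriv (ψ r)) z| ^ 2 * r))
        ≤ ENNReal.ofReal C
            * ∫⁻ z : ℝ, ∫⁻ r in Ioo (0:ℝ) 1,
                ENNReal.ofReal (|Lrad ψ r z + deriv (deriv (ψ r)) z| ^ 2 * r) := by
  refine ⟨1, one_pos, ?_⟩
  intro ψ hsm hsupp hbc
  set Ψ : ℝ × ℝ → ℝ := Function.uncurry ψ with hΨdef
  have hΨ : ContDiff ℝ (⊤ : ℕ∞) Ψ := hsm
  obtain ⟨R₀, hR₀⟩ := hsupp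
  set R : ℝ := max R₀ 0 with hRdef
  have hR : 0 ≤ R := le_max_right _ _
  have hv : ∀ p : ℝ × ℝ, R < |p.2| → Ψ p = 0 := fun p hp =>
    hR₀ p.1 p.2 (lt_of_le_of_lt (le_max_left _ _) hp)
  -- smoothness of partial derivatives
  have hp1 : ContDiff ℝ (⊤ : ℕ∞) (pd1 Ψ) := pd1_smooth hΨ
  have hp2 : ContDiff ℝ (⊤ : ℕ∞) (pd2 Ψ) := pd2_smooth hΨ
  have hp11 : ContDiff ℝ (⊤ : ℕ∞) (pd1 (pd1 Ψ)) := pd1_smooth hp1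
  have hp12 : ContDiff ℝ (⊤ : ℕ∞) (pd1 (pd2 Ψ)) := pd1_smooth hp2
  have hp21 : ContDiff ℝ (⊤ : ℕ∞) (pd2 (pd1 Ψ)) := pd2_smooth hp1
  have hp22 : ContDiff ℝ (⊤ : ℕ∞) (pd2 (pd2 Ψ)) := pd2_smooth hp2
  have hp122 : ContDiff ℝ (⊤ : ℕ∞) (pd1 (pd2 (pd2 Ψ))) := pd1_smooth hp22
  have hp212 : ContDiff ℝ (⊤ : ℕ∞) (pd2 (pd1 (pd2 Ψ))) := pd2_smooth hp12
  -- vanishing for large |z|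
  have hv1 : ∀ p : ℝ × ℝ, R < |p.2| → pd1 Ψ p = 0 := fun p hp => (pd_vanish hv p hp).1
  have hv2 : ∀ p : ℝ × ℝ, R < |p.2| → pd2 Ψ p = 0 := fun p hp => (pd_vanish hv p hp).2
  have hv11 : ∀ p : ℝ × ℝ, R < |p.2| → pd1 (pd1 Ψ) p = 0 := fun p hp => (pd_vanish hv1 p hp).1
  have hv12 : ∀ p : ℝ × ℝ, R < |p.2| → pd1 (pd2 Ψ) p = 0 := fun p hp => (pd_vanish hv2 p hp).1
  have hv21 : ∀ p : ℝ × ℝ, R < |p.2| → pd2 (pd1 Ψ) p = 0 := fun p hp => (pd_vanish hv1 p hp).2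
  have hv22 : ∀ p : ℝ × ℝ, R < |p.2| → pd2 (pd2 Ψ) p = 0 := fun p hp => (pd_vanish hv2 p hp).2
  have hv122 : ∀ p : ℝ × ℝ, R < |p.2| → pd1 (pd2 (pd2 Ψ)) p = 0 := fun p hp =>
    (pd_vanish hv22 p hp).1
  have hv212 : ∀ p : ℝ × ℝ, R < |p.2| → pd2 (pd1 (pd2 Ψ)) p = 0 := fun p hp =>
    (pd_vanish hv12 p hp).2
  -- boundary conditions
  have hΨ0 : ∀ z : ℝ, Ψ (0, z) = 0 := fun z => (hbc z).1
  have hΨ1 : ∀ z : ℝ, Ψ (1, z) = 0 := fun z => (hbc z).2.1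
  have hp1_1 : ∀ z : ℝ, pd1 Ψ (1, z) = 0 := by
    intro z
    have h := (hasDerivAt_pd1 hΨ 1 z).deriv
    rw [← h]
    exact (hbc z).2.2.1
  have hp2_0 : ∀ z : ℝ, pd2 Ψ (0, z) = 0 := by
    intro z
    have h := (hasDerivAt_pd2 hΨ 0 z).deriv
    have h2 : (fun t => Ψ (0, t)) = (fun _ : ℝ => (0:ℝ)) := funext fun t => hΨ0 t
    rw [← h, h2, deriv_const]
  -- identifying the integrands
  have idA : ∀ r z : ℝ, Lrad ψ r z
      = pd1 (pd1 Ψ) (r, z) + pd1 Ψ (r, z) / r - Ψ (r, z) / r ^ 2 := by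
    intro r z
    have e0 : deriv (fun s => ψ s z) = fun s => pd1 Ψ (s, z) :=
      funext fun s => (hasDerivAt_pd1 hΨ s z).deriv
    unfold Lrad
    rw [e0, (hasDerivAt_pd1 hp1 r z).deriv]
    rfl
  have idW : ∀ r z : ℝ, deriv (fun s => s * deriv (ψ s) z) r = wF Ψ (r, z) := by
    intro r z
    have e0 : (fun s : ℝ => s * deriv (ψ s) z) = fun s => s * pd2 Ψ (s, z) :=
      funext fun s => congrArg (fun x => s * x) ((hasDerivAt_pd2 hΨ s z).deriv)
    have hda : HasDerivAt (fun s : ℝ => s * pd2 Ψ (s, z))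
        (1 * pd2 Ψ (r, z) + r * pd1 (pd2 Ψ) (r, z)) r :=
      (hasDerivAt_id r).mul (hasDerivAt_pd1 hp2 r z)
    rw [e0, hda.deriv]
    unfold wF
    ring
  have idB : ∀ r z : ℝ, deriv (deriv (ψ r)) z = pd2 (pd2 Ψ) (r, z) := by
    intro r z
    have e0 : deriv (ψ r) = fun t => pd2 Ψ (r, t) :=
      funext fun t => (hasDerivAt_pd2 hΨ r t).deriv
    rw [e0, (hasDerivAt_pd2 hp2 r z).deriv]
  -- bounds
  obtain ⟨M1, hM1n, hM1⟩ := bound_aux hp1.continuous hv1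
  obtain ⟨M11, hM11n, hM11⟩ := bound_aux hp11.continuous hv11
  obtain ⟨M12, hM12n, hM12⟩ := bound_aux hp12.continuous hv12
  obtain ⟨M21, hM21n, hM21⟩ := bound_aux hp21.continuous hv21
  obtain ⟨M22, hM22n, hM22⟩ := bound_aux hp22.continuous hv22
  obtain ⟨M212, hM212n, hM212⟩ := bound_aux hp212.continuous hv212
  have bΨ : ∀ z : ℝ, ∀ r ∈ Icc (0:ℝ) 1, |Ψ (r, z)| ≤ M1 * r := by
    intro z r hr
    exact mvt_bound hr.1 (fun x _ => hasDerivAt_pd1 hΨ x z)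
      (fun x hx => hM1 x z ⟨hx.1, hx.2.trans hr.2⟩) (hΨ0 z)
  have bp2 : ∀ z : ℝ, ∀ r ∈ Icc (0:ℝ) 1, |pd2 Ψ (r, z)| ≤ M12 * r := by
    intro z r hr
    exact mvt_bound hr.1 (fun x _ => hasDerivAt_pd1 hp2 x z)
      (fun x hx => hM12 x z ⟨hx.1, hx.2.trans hr.2⟩) (hp2_0 z)
  have bh : ∀ z : ℝ, ∀ r ∈ Icc (0:ℝ) 1, |r * pd1 Ψ (r, z) - Ψ (r, z)| ≤ M11 * r * r := by
    intro z r hr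
    have hd : ∀ x ∈ Icc (0:ℝ) r,
        HasDerivAt (fun s => s * pd1 Ψ (s, z) - Ψ (s, z)) (x * pd1 (pd1 Ψ) (x, z)) x := by
      intro x _
      have h1 : HasDerivAt (fun s : ℝ => s * pd1 Ψ (s, z))
          (1 * pd1 Ψ (x, z) + x * pd1 (pd1 Ψ) (x, z)) x :=
        (hasDerivAt_id x).mul (hasDerivAt_pd1 hp1 x z)
      have h2 := h1.sub (hasDerivAt_pd1 hΨ x z)
      refine h2.congr_deriv ?_
      ring
    have hb' : ∀ x ∈ Icc (0:ℝ) r, |x * pd1 (pd1 Ψ) (x, z)| ≤ M11 * r := by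
      intro x hx
      have h1 : |pd1 (pd1 Ψ) (x, z)| ≤ M11 := hM11 x z ⟨hx.1, hx.2.trans hr.2⟩
      rw [abs_mul, abs_of_nonneg hx.1]
      nlinarith [abs_nonneg (pd1 (pd1 Ψ) (x, z)), hx.1, hx.2]
    have := mvt_bound hr.1 hd hb' (by simp [hΨ0 z])
    simpa using this
  have bA : ∀ z : ℝ, ∀ r ∈ Ioo (0:ℝ) 1, |aF Ψ (r, z)| ≤ 2 * M11 := by
    intro z r hr
    have hr0 : (0:ℝ) < r := hr.1
    have e : aF Ψ (r, z)
        = pd1 (pd1 Ψ) (r, z) + (r * pd1 Ψ (r, z) - Ψ (r, z)) / r ^ 2 := by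
      unfold aF
      field_simp
      ring
    rw [e]
    have h1 := hM11 r z ⟨hr0.le, hr.2.le⟩
    have h2 := bh z r ⟨hr0.le, hr.2.le⟩
    have h3 : |(r * pd1 Ψ (r, z) - Ψ (r, z)) / r ^ 2| ≤ M11 := by
      rw [abs_div, abs_of_pos (pow_pos hr0 2), div_le_iff₀ (pow_pos hr0 2)]
      calc |r * pd1 Ψ (r, z) - Ψ (r, z)| ≤ M11 * r * r := h2
        _ = M11 * r ^ 2 := by ring
    calc |pd1 (pd1 Ψ) (r, z) + (r * pd1 Ψ (r, z) - Ψ (r, z)) / r ^ 2|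
        ≤ |pd1 (pd1 Ψ) (r, z)| + |(r * pd1 Ψ (r, z) - Ψ (r, z)) / r ^ 2| := abs_add_le _ _
      _ ≤ 2 * M11 := by linarith
  have bW : ∀ z : ℝ, ∀ r ∈ Ioo (0:ℝ) 1, |wF Ψ (r, z)| ≤ 2 * M12 * r := by
    intro z r hr
    have h1 := bp2 z r ⟨hr.1.le, hr.2.le⟩
    have h2 := hM12 r z ⟨hr.1.le, hr.2.le⟩
    unfold wF
    calc |pd2 Ψ (r, z) + r * pd1 (pd2 Ψ) (r, z)|
        ≤ |pd2 Ψ (r, z)| + |r * pd1 (pd2 Ψ) (r, z)| := abs_add_le _ _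
      _ ≤ M12 * r + r * M12 := by
          refine add_le_add h1 ?_
          rw [abs_mul, abs_of_nonneg hr.1.le]
          nlinarith [abs_nonneg (pd1 (pd2 Ψ) (r, z)), hr.1.le]
      _ = 2 * M12 * r := by ring
  have hfpt : ∀ z : ℝ, ∀ r ∈ Ioo (0:ℝ) 1, 0 ≤ fF Ψ (r, z) := by
    intro z r hr
    have hr0 : (0:ℝ) < r := hr.1
    unfold fF
    have t1 : 0 ≤ (aF Ψ (r, z)) ^ 2 * (r, z).1 := mul_nonneg (sq_nonneg _) hr0.le
    have t2 : 0 ≤ 2 * (wF Ψ (r, z)) ^ 2 / (r, z).1 := div_nonneg (by positivity) hr0.le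
    have t3 : 0 ≤ (pd2 (pd2 Ψ) (r, z)) ^ 2 * (r, z).1 := mul_nonneg (sq_nonneg _) hr0.le
    linarith
  have hgpt : ∀ z : ℝ, ∀ r ∈ Ioo (0:ℝ) 1, 0 ≤ gF Ψ (r, z) := by
    intro z r hr
    exact mul_nonneg (sq_nonneg _) hr.1.le
  have bF : ∀ r z : ℝ, r ∈ Ioo (0:ℝ) 1 →
      |fF Ψ (r, z)| ≤ (2 * M11) ^ 2 + 2 * (2 * M12) ^ 2 + M22 ^ 2 := by
    intro r z hr
    have hr0 : (0:ℝ) < r := hr.1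
    have hA := bA z r hr
    have hW := bW z r hr
    have hB := hM22 r z ⟨hr0.le, hr.2.le⟩
    have hA' := abs_le.1 hA
    have hW' := abs_le.1 hW
    have hB' := abs_le.1 hB
    have t1 : (aF Ψ (r, z)) ^ 2 * r ≤ (2 * M11) ^ 2 := by nlinarith [sq_nonneg (aF Ψ (r, z)), hr.2]
    have t2 : 2 * (wF Ψ (r, z)) ^ 2 / r ≤ 2 * (2 * M12) ^ 2 := by
      rw [div_le_iff₀ hr0]
      nlinarith [sq_nonneg (wF Ψ (r, z)), hr.2, hr0]
    have t3 : (pd2 (pd2 Ψ) (r, z)) ^ 2 * r ≤ M22 ^ 2 := by nlinarith [sq_nonneg (pd2 (pd2 Ψ) (r, z)), hr.2]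
    rw [abs_of_nonneg (hfpt z r hr)]
    unfold fF
    simp only
    linarith
  have bG : ∀ r z : ℝ, r ∈ Ioo (0:ℝ) 1 → |gF Ψ (r, z)| ≤ (2 * M11 + M22) ^ 2 := by
    intro r z hr
    have hr0 : (0:ℝ) < r := hr.1
    have hA := bA z r hr
    have hB := hM22 r z ⟨hr0.le, hr.2.le⟩
    have hAB : |aF Ψ (r, z) + pd2 (pd2 Ψ) (r, z)| ≤ 2 * M11 + M22 :=
      (abs_add_le _ _).trans (add_le_add hA hB)
    have hAB' := abs_le.1 hAB
    rw [abs_of_nonneg (hgpt z r hr)]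
    unfold gF
    simp only
    nlinarith [sq_nonneg (aF Ψ (r, z) + pd2 (pd2 Ψ) (r, z)), hr.2, hr0]
  have bQd : ∀ r z : ℝ, r ∈ Ioo (0:ℝ) 1 →
      |QdF Ψ (r, z)| ≤ (M12 + M21) * (2 * M12) + (M1 + M1) * (M22 + M212) := by
    intro r z hr
    have hr0 : (0:ℝ) < r := hr.1
    have hrI : r ∈ Icc (0:ℝ) 1 := ⟨hr0.le, hr.2.le⟩
    have t1 : |pd2 Ψ (r, z) / r| ≤ M12 := by
      rw [abs_div, abs_of_pos hr0, div_le_iff₀ hr0]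
      exact bp2 z r hrI
    have t2 : |Ψ (r, z) / r| ≤ M1 := by
      rw [abs_div, abs_of_pos hr0, div_le_iff₀ hr0]
      exact bΨ z r hrI
    have t3 : |pd2 Ψ (r, z) / r + pd2 (pd1 Ψ) (r, z)| ≤ M12 + M21 :=
      (abs_add_le _ _).trans (add_le_add t1 (hM21 r z hrI))
    have t4 : |wF Ψ (r, z)| ≤ 2 * M12 := by
      refine (bW z r hr).trans ?_
      nlinarith [hr.2, hr0]
    have t5 : |Ψ (r, z) / r + pd1 Ψ (r, z)| ≤ M1 + M1 :=
      (abs_add_le _ _).trans (add_le_add t2 (hM1 r z hrI))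
    have t6 : |pd2 (pd2 Ψ) (r, z) + r * pd2 (pd1 (pd2 Ψ)) (r, z)| ≤ M22 + M212 := by
      refine (abs_add_le _ _).trans (add_le_add (hM22 r z hrI) ?_)
      rw [abs_mul, abs_of_nonneg hr0.le]
      nlinarith [abs_nonneg (pd2 (pd1 (pd2 Ψ)) (r, z)), hM212 r z hrI, hr.2]
    unfold QdF
    refine (abs_add_le _ _).trans ?_
    rw [abs_mul, abs_mul]
    exact add_le_add (mul_le_mul t3 t4 (abs_nonneg _) (by linarith))
      (mul_le_mul t5 t6 (abs_nonneg _) (by linarith))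
  -- vanishing for large |z| of all integrands
  have vF : ∀ r z : ℝ, R < |z| → fF Ψ (r, z) = 0 := by
    intro r z hz
    have hz' : R < |((r, z) : ℝ × ℝ).2| := hz
    unfold fF aF wF
    simp [hv _ hz', hv1 _ hz', hv2 _ hz', hv11 _ hz', hv12 _ hz', hv22 _ hz']
  have vG : ∀ r z : ℝ, R < |z| → gF Ψ (r, z) = 0 := by
    intro r z hz
    have hz' : R < |((r, z) : ℝ × ℝ).2| := hz
    unfold gF aF
    simp [hv _ hz', hv1 _ hz', hv11 _ hz', hv22 _ hz']
  have vQ : ∀ r z : ℝ, R < |z| → QF Ψ (r, z) = 0 := by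
    intro r z hz
    have hz' : R < |((r, z) : ℝ × ℝ).2| := hz
    unfold QF wF
    simp [hv _ hz', hv1 _ hz', hv2 _ hz', hv12 _ hz']
  have vQd : ∀ r z : ℝ, R < |z| → QdF Ψ (r, z) = 0 := by
    intro r z hz
    have hz' : R < |((r, z) : ℝ × ℝ).2| := hz
    unfold QdF wF
    simp [hv _ hz', hv1 _ hz', hv2 _ hz', hv12 _ hz', hv21 _ hz', hv22 _ hz', hv212 _ hz']
  -- continuity
  have cw : Continuous (wF Ψ) := hp2.continuous.add (continuous_fst.mul hp12.continuous)
  have cfst : ContinuousOn (fun p : ℝ × ℝ => p.1) {p : ℝ × ℝ | 0 < p.1} :=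
    continuous_fst.continuousOn
  have hne : ∀ p ∈ {p : ℝ × ℝ | 0 < p.1}, p.1 ≠ 0 := fun p hp => ne_of_gt hp
  have caF : ContinuousOn (aF Ψ) {p : ℝ × ℝ | 0 < p.1} :=
    (hp11.continuous.continuousOn.add (hp1.continuous.continuousOn.div cfst hne)).sub
      (hΨ.continuous.continuousOn.div (cfst.pow 2) (fun p hp => pow_ne_zero 2 (hne p hp)))
  have cfF : ContinuousOn (fF Ψ) {p : ℝ × ℝ | 0 < p.1} :=
    (((caF.pow 2).mul cfst).add
      (((continuous_const.mul (cw.pow 2)).continuousOn).div cfst hne)).add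
      (((hp22.continuous.pow 2).mul continuous_fst).continuousOn)
  have cgF : ContinuousOn (gF Ψ) {p : ℝ × ℝ | 0 < p.1} :=
    ((caF.add hp22.continuous.continuousOn).pow 2).mul cfst
  have cQdF : ContinuousOn (QdF Ψ) {p : ℝ × ℝ | 0 < p.1} :=
    (((hp2.continuous.continuousOn.div cfst hne).add hp21.continuous.continuousOn).mul
        cw.continuousOn).add
      (((hΨ.continuous.continuousOn.div cfst hne).add hp1.continuous.continuousOn).mul
        (hp22.continuous.continuousOn.add (cfst.mul hp212.continuous.continuousOn)))
  have cPd : Continuous (PdF Ψ) :=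
    (((continuous_const.mul hp1.continuous).add (continuous_fst.mul hp11.continuous)).mul
      hp22.continuous).add
      ((hΨ.continuous.add (continuous_fst.mul hp1.continuous)).mul hp122.continuous)
  have hsec : ∀ e : ℝ × ℝ → ℝ, ContinuousOn e {p : ℝ × ℝ | 0 < p.1} →
      ∀ z : ℝ, ContinuousOn (fun r => e (r, z)) (Ioo 0 1) := by
    intro e he z
    exact he.comp ((continuous_id.prodMk continuous_const).continuousOn) (fun r hr => hr.1)
  -- integrability per z
  have hFi : ∀ z : ℝ, IntegrableOn (fun r => fF Ψ (r, z)) (Ioo 0 1) volume := fun z =>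
    integrableOn_aux (hsec _ cfF z) (fun r hr => bF r z hr)
  have hGi : ∀ z : ℝ, IntegrableOn (fun r => gF Ψ (r, z)) (Ioo 0 1) volume := fun z =>
    integrableOn_aux (hsec _ cgF z) (fun r hr => bG r z hr)
  have hQdi : ∀ z : ℝ, IntegrableOn (fun r => QdF Ψ (r, z)) (Ioo 0 1) volume := fun z =>
    integrableOn_aux (hsec _ cQdF z) (fun r hr => bQd r z hr)
  have hPdi : ∀ z : ℝ, IntegrableOn (fun r => PdF Ψ (r, z)) (Ioo 0 1) volume := fun z =>
    ((cPd.comp (continuous_id.prodMk continuous_const)).integrableOn_Icc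
      (a := 0) (b := 1)).mono_set Ioo_subset_Icc_self
  -- product integrability
  have hFprod : Integrable (fun q : ℝ × ℝ => fF Ψ (q.2, q.1))
      ((volume : Measure ℝ).prod ((volume : Measure ℝ).restrict (Ioo 0 1))) :=
    integrable_swap_aux (by positivity) cfF bF vF
  have hGprod : Integrable (fun q : ℝ × ℝ => gF Ψ (q.2, q.1))
      ((volume : Measure ℝ).prod ((volume : Measure ℝ).restrict (Ioo 0 1))) :=
    integrable_swap_aux (by positivity) cgF bG vG
  have hQprod : Integrable (fun q : ℝ × ℝ => QdF Ψ (q.2, q.1))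
      ((volume : Measure ℝ).prod ((volume : Measure ℝ).restrict (Ioo 0 1))) :=
    integrable_swap_aux (by positivity) cQdF bQd vQd
  have hFint : Integrable (fun z => ∫ r in Ioo (0:ℝ) 1, fF Ψ (r, z)) volume :=
    hFprod.integral_prod_left
  have hGint : Integrable (fun z => ∫ r in Ioo (0:ℝ) 1, gF Ψ (r, z)) volume :=
    hGprod.integral_prod_left
  have hHint : Integrable (fun z => ∫ r in Ioo (0:ℝ) 1, QdF Ψ (r, z)) volume :=
    hQprod.integral_prod_left
  -- FTC in r
  have stepP : ∀ z : ℝ, ∫ r in Ioo (0:ℝ) 1, PdF Ψ (r, z) = 0 := by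
    intro z
    have hftc := intervalIntegral.integral_eq_sub_of_hasDerivAt (a := (0:ℝ)) (b := 1)
      (f := fun r => PF Ψ (r, z)) (f' := fun r => PdF Ψ (r, z))
      (fun r _ => hasDerivAt_PF hΨ r z)
      ((cPd.comp (continuous_id.prodMk continuous_const)).intervalIntegrable 0 1)
    rw [intervalIntegral.integral_of_le zero_le_one, integral_Ioc_eq_integral_Ioo] at hftc
    rw [hftc]
    show PF Ψ (1, z) - PF Ψ (0, z) = 0
    have e1 : PF Ψ (1, z) = 0 := by unfold PF; rw [hΨ1 z, hp1_1 z]; ring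
    have e0 : PF Ψ (0, z) = 0 := by unfold PF; rw [hΨ0 z]; ring
    rw [e1, e0, sub_zero]
  -- FTC in z
  have stepQ : ∀ r ∈ Ioo (0:ℝ) 1, ∫ z, QdF Ψ (r, z) = 0 := by
    intro r _
    have c2 : Continuous (fun t : ℝ => ((r, t) : ℝ × ℝ)) := continuous_const.prodMk continuous_id
    have hqc : Continuous (fun z => QdF Ψ (r, z)) := by
      exact ((((hp2.continuous.comp c2).div_const r).add (hp21.continuous.comp c2)).mul
          ((hp2.continuous.comp c2).add (continuous_const.mul (hp12.continuous.comp c2)))).add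
        ((((hΨ.continuous.comp c2).div_const r).add (hp1.continuous.comp c2)).mul
          ((hp22.continuous.comp c2).add (continuous_const.mul (hp212.continuous.comp c2))))
    exact integral_deriv_zero hR (fun z => hasDerivAt_QF hΨ r z) hqc
      (fun z hz => vQ r z hz) (fun z hz => vQd r z hz)
  -- swap and conclude the cross term vanishes
  have hswap : ∫ z, ∫ r in Ioo (0:ℝ) 1, QdF Ψ (r, z) = 0 := by
    have h := integral_integral_swap (f := fun z r => QdF Ψ (r, z))
      (μ := (volume : Measure ℝ)) (ν := (volume : Measure ℝ).restrict (Ioo 0 1)) hQprod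
    rw [h, setIntegral_congr_fun measurableSet_Ioo (fun r hr => stepQ r hr)]
    simp
  -- per-z identity
  have stepFG : ∀ z : ℝ, ∫ r in Ioo (0:ℝ) 1, fF Ψ (r, z)
      = (∫ r in Ioo (0:ℝ) 1, gF Ψ (r, z)) + 2 * ∫ r in Ioo (0:ℝ) 1, QdF Ψ (r, z) := by
    intro z
    have e1 : ∫ r in Ioo (0:ℝ) 1, fF Ψ (r, z)
        = ∫ r in Ioo (0:ℝ) 1, (gF Ψ (r, z) + (2 * QdF Ψ (r, z) - 2 * PdF Ψ (r, z))) :=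
      setIntegral_congr_fun measurableSet_Ioo (fun r hr => by
        have := key_algebra hΨ r z (ne_of_gt hr.1)
        linarith)
    have hint2 : Integrable (fun r => 2 * QdF Ψ (r, z) - 2 * PdF Ψ (r, z))
        (volume.restrict (Ioo 0 1)) := ((hQdi z).const_mul 2).sub ((hPdi z).const_mul 2)
    rw [e1, integral_add (hGi z) hint2,
      integral_sub ((hQdi z).const_mul 2) ((hPdi z).const_mul 2),
      integral_const_mul, integral_const_mul, stepP z]
    ring
  have htotal : ∫ z, ∫ r in Ioo (0:ℝ) 1, fF Ψ (r, z)
      = ∫ z, ∫ r in Ioo (0:ℝ) 1, gF Ψ (r, z) := by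
    calc ∫ z, ∫ r in Ioo (0:ℝ) 1, fF Ψ (r, z)
        = ∫ z, ((∫ r in Ioo (0:ℝ) 1, gF Ψ (r, z))
            + 2 * ∫ r in Ioo (0:ℝ) 1, QdF Ψ (r, z)) := by
          exact integral_congr_ae (Filter.Eventually.of_forall stepFG)
      _ = (∫ z, ∫ r in Ioo (0:ℝ) 1, gF Ψ (r, z))
            + ∫ z, 2 * ∫ r in Ioo (0:ℝ) 1, QdF Ψ (r, z) :=
          integral_add hGint (hHint.const_mul 2)
      _ = ∫ z, ∫ r in Ioo (0:ℝ) 1, gF Ψ (r, z) := by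
          rw [integral_const_mul, hswap]
          ring
  -- integrand identification
  have hfid : ∀ r z : ℝ, |Lrad ψ r z| ^ 2 * r
      + 2 * |deriv (fun s => s * deriv (ψ s) z) r| ^ 2 / r
      + |deriv (deriv (ψ r)) z| ^ 2 * r = fF Ψ (r, z) := by
    intro r z
    rw [idW r z, idB r z, sq_abs, sq_abs, sq_abs, idA r z]
    rfl
  have hgid : ∀ r z : ℝ, |Lrad ψ r z + deriv (deriv (ψ r)) z| ^ 2 * r = gF Ψ (r, z) := by
    intro r z
    rw [idB r z, sq_abs, idA r z]
    rfl
  -- lintegral conversions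
  have hinnerF : ∀ z : ℝ, (∫⁻ r in Ioo (0:ℝ) 1,
      ENNReal.ofReal (|Lrad ψ r z| ^ 2 * r
        + 2 * |deriv (fun s => s * deriv (ψ s) z) r| ^ 2 / r
        + |deriv (deriv (ψ r)) z| ^ 2 * r))
      = ENNReal.ofReal (∫ r in Ioo (0:ℝ) 1, fF Ψ (r, z)) := by
    intro z
    have e := lintegral_congr (μ := volume.restrict (Ioo (0:ℝ) 1))
      (f := fun r => ENNReal.ofReal (|Lrad ψ r z| ^ 2 * r
        + 2 * |deriv (fun s => s * deriv (ψ s) z) r| ^ 2 / r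
        + |deriv (deriv (ψ r)) z| ^ 2 * r))
      (g := fun r => ENNReal.ofReal (fF Ψ (r, z)))
      (fun r => by exact congrArg ENNReal.ofReal (hfid r z))
    rw [e]
    refine (ofReal_integral_eq_lintegral_ofReal (hFi z) ?_).symm
    filter_upwards [ae_restrict_mem measurableSet_Ioo] with r hr
    exact hfpt z r hr
  have hinnerG : ∀ z : ℝ, (∫⁻ r in Ioo (0:ℝ) 1,
      ENNReal.ofReal (|Lrad ψ r z + deriv (deriv (ψ r)) z| ^ 2 * r))
      = ENNReal.ofReal (∫ r in Ioo (0:ℝ) 1, gF Ψ (r, z)) := by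
    intro z
    have e := lintegral_congr (μ := volume.restrict (Ioo (0:ℝ) 1))
      (f := fun r => ENNReal.ofReal (|Lrad ψ r z + deriv (deriv (ψ r)) z| ^ 2 * r))
      (g := fun r => ENNReal.ofReal (gF Ψ (r, z)))
      (fun r => by exact congrArg ENNReal.ofReal (hgid r z))
    rw [e]
    refine (ofReal_integral_eq_lintegral_ofReal (hGi z) ?_).symm
    filter_upwards [ae_restrict_mem measurableSet_Ioo] with r hr
    exact hgpt z r hr
  have hFnn : 0 ≤ᵐ[volume] fun z => ∫ r in Ioo (0:ℝ) 1, fF Ψ (r, z) :=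
    Filter.Eventually.of_forall fun z =>
      setIntegral_nonneg measurableSet_Ioo (fun r hr => hfpt z r hr)
  have hGnn : 0 ≤ᵐ[volume] fun z => ∫ r in Ioo (0:ℝ) 1, gF Ψ (r, z) :=
    Filter.Eventually.of_forall fun z =>
      setIntegral_nonneg measurableSet_Ioo (fun r hr => hgpt z r hr)
  calc (∫⁻ z : ℝ, ∫⁻ r in Ioo (0:ℝ) 1,
        ENNReal.ofReal (|Lrad ψ r z| ^ 2 * r
          + 2 * |deriv (fun s => s * deriv (ψ s) z) r| ^ 2 / r
          + |deriv (deriv (ψ r)) z| ^ 2 * r))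
      = (∫⁻ z : ℝ, ENNReal.ofReal (∫ r in Ioo (0:ℝ) 1, fF Ψ (r, z))) :=
        lintegral_congr hinnerF
    _ = ENNReal.ofReal (∫ z, ∫ r in Ioo (0:ℝ) 1, fF Ψ (r, z)) :=
        (ofReal_integral_eq_lintegral_ofReal hFint hFnn).symm
    _ = ENNReal.ofReal (∫ z, ∫ r in Ioo (0:ℝ) 1, gF Ψ (r, z)) := by rw [htotal]
    _ = (∫⁻ z : ℝ, ENNReal.ofReal (∫ r in Ioo (0:ℝ) 1, gF Ψ (r, z))) :=
        ofReal_integral_eq_lintegral_ofReal hGint hGnn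
    _ = (∫⁻ z : ℝ, ∫⁻ r in Ioo (0:ℝ) 1,
          ENNReal.ofReal (|Lrad ψ r z + deriv (deriv (ψ r)) z| ^ 2 * r)) :=
        (lintegral_congr hinnerG).symm
    _ ≤ ENNReal.ofReal 1 * (∫⁻ z : ℝ, ∫⁻ r in Ioo (0:ℝ) 1,
          ENNReal.ofReal (|Lrad ψ r z + deriv (deriv (ψ r)) z| ^ 2 * r)) := by
        rw [ENNReal.ofReal_one, one_mul]
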